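/- Let n be a positive integer with n ≡ 1 (mod 4), let d = (3^((n+1)/2) - 1)/2, and let b ∈ GF(3^n). Then there do not simultaneously exist x₃, x₄ ∈ GF(3^n) such that (x₃+1)^d + x₃^d = b, (x₄+1)^d + x₄^d = b, x₃+1 is a nonzero square and x₃ is a nonsquare in GF(3^n), and x₄+1 is a nonsquare and x₄ is a nonzero square in GF(3^n). -/

import Mathlib

/-!
Write `N t = t ^ (3 ^ m + 1)`, `d = (3 ^ m - 1) / 2` and `q = 3 ^ n = 3 ^ (2m - 1)`. Then
`N (a ^ d) = χ(a) a`, and in characteristic 3 `N (u + v) + N (u - v) = -(N u + N v)`. Hence if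
`b = (x + 1) ^ d + x ^ d` where `χ(x) = -χ(x + 1) = -σ`, the element `u = x ^ d - (x + 1) ^ d`
satisfies `N b + N u = -σ`. Two such `x`, `y` with opposite signs `σ` and the same `b` give
`N u + N v = N b`. Raising to the power `3 ^ m`, which sends `N t` to `t ^ 2 N t` because
`3 ^ (2m) = 3q`, yields `N u (u ^ 2 - b ^ 2) + N v (v ^ 2 - b ^ 2) = 0`. Both summands are
nonzero squares, as `u ^ 2 - b ^ 2 = -(x (x + 1)) ^ d` is a product of two nonsquares; their sum
cannot vanish because `-1` is a nonsquare, `q` being `3 mod 4`.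
-/

instance : Fact (Nat.Prime 3) := ⟨by norm_num⟩

lemma three_pow_mod_four {k : ℕ} (hk : Odd k) : 3 ^ k % 4 = 3 := by
  obtain ⟨j, rfl⟩ := hk
  rw [pow_succ, pow_mul, Nat.mul_mod, Nat.pow_mod]
  norm_num

lemma odd_three_pow_sub_one_div_two {m : ℕ} (hm : Odd m) : Odd ((3 ^ m - 1) / 2) := by
  have h := three_pow_mod_four hm
  generalize 3 ^ m = s at h ⊢
  rw [Nat.odd_iff]
  omega

lemma three_pow_mul_three_pow {n m : ℕ} (hnm : n + 1 = 2 * m) :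
    3 ^ m * 3 ^ m = 3 * 3 ^ n := by
  rw [← pow_add, ← two_mul, ← hnm, pow_succ']

lemma three_pow_sub_one_div_two_mul {n m : ℕ} (hnm : n + 1 = 2 * m) :
    (3 ^ m - 1) / 2 * (3 ^ m + 1) = 3 * (3 ^ n / 2) + 1 := by
  have hsq := three_pow_mul_three_pow hnm
  obtain ⟨d, hd⟩ : Odd (3 ^ m) := Odd.pow (by decide)
  obtain ⟨e, he⟩ : Odd (3 ^ n) := Odd.pow (by decide)
  rw [hd, he] at hsq ⊢
  simp only [add_tsub_cancel_right, Nat.mul_div_cancel_left _ two_pos,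
    Nat.mul_add_div two_pos, Nat.div_eq_of_lt one_lt_two, add_zero]
  nlinarith

section

variable {F : Type*} [Field F]

lemma add_pow_add_sub_pow [CharP F 3] (m : ℕ) (u v : F) :
    (u + v) ^ (3 ^ m + 1) + (u - v) ^ (3 ^ m + 1) = -(u ^ (3 ^ m + 1) + v ^ (3 ^ m + 1)) := by
  have h3 : (3 : F) = 0 := by exact_mod_cast CharP.cast_eq_zero F 3
  simp only [pow_succ, add_pow_char_pow, sub_pow_char_pow]
  linear_combination (u ^ 3 ^ m * u + v ^ 3 ^ m * v) * h3

variable [Fintype F]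

lemma pow_three_pow_succ_pow_three_pow {n m : ℕ} (hcard : Fintype.card F = 3 ^ n)
    (hnm : n + 1 = 2 * m) (x : F) :
    (x ^ (3 ^ m + 1)) ^ 3 ^ m = x ^ 2 * x ^ (3 ^ m + 1) := by
  have hq : x ^ 3 ^ n = x := hcard ▸ FiniteField.pow_card x
  calc (x ^ (3 ^ m + 1)) ^ 3 ^ m = (x ^ 3 ^ n) ^ 3 * x ^ 3 ^ m := by
        rw [← pow_mul, add_mul, three_pow_mul_three_pow hnm, one_mul, pow_add, mul_comm 3,
          pow_mul]
    _ = x ^ 2 * x ^ (3 ^ m + 1) := by rw [hq]; ring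

lemma pow_succ_mul_sq_sub_add_eq_zero [CharP F 3] {n m : ℕ} (hcard : Fintype.card F = 3 ^ n)
    (hnm : n + 1 = 2 * m) {u v w : F}
    (h : u ^ (3 ^ m + 1) + v ^ (3 ^ m + 1) = w ^ (3 ^ m + 1)) :
    u ^ (3 ^ m + 1) * (u ^ 2 - w ^ 2) + v ^ (3 ^ m + 1) * (v ^ 2 - w ^ 2) = 0 := by
  have hs := congrArg (· ^ 3 ^ m) h
  simp only [add_pow_char_pow, pow_three_pow_succ_pow_three_pow hcard hnm] at hs
  linear_combination hs - w ^ 2 * h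

variable [DecidableEq F]

lemma quadraticChar_pow_of_odd {d : ℕ} (hd : Odd d) (a : F) :
    quadraticChar F (a ^ d) = quadraticChar F a := by
  rw [map_pow, ← MulChar.pow_apply' _ hd.pos.ne', (quadraticChar_isQuadratic F).pow_odd hd]

lemma quadraticChar_pow_of_even {k : ℕ} (hk : Even k) {a : F} (ha : a ≠ 0) :
    quadraticChar F (a ^ k) = 1 := by
  obtain ⟨j, rfl⟩ := hk
  rw [← two_mul, pow_mul', quadraticChar_sq_one' (pow_ne_zero _ ha)]

lemma quadraticChar_neg_one_of_card_eq_three_pow {n : ℕ} (hcard : Fintype.card F = 3 ^ n)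
    (hn : Odd n) :
    quadraticChar F (-1) = -1 := by
  rw [quadraticChar_neg_one_iff_not_isSquare, FiniteField.isSquare_neg_one_iff, hcard,
    three_pow_mod_four hn]
  simp

lemma quadraticChar_eq_neg_of_not_isSquare_mul {x : F} (hx : ¬IsSquare (x * (x + 1))) :
    quadraticChar F x = -quadraticChar F (x + 1) := by
  rw [← quadraticChar_neg_one_iff_not_isSquare, map_mul] at hx
  rcases Int.eq_one_or_neg_one_of_mul_eq_neg_one' hx with ⟨h, h'⟩ | ⟨h, h'⟩ <;> simp [h, h']

lemma pow_sub_add_one_pow_ne_zero {d : ℕ} (hd : Odd d) {x : F} (hx : ¬IsSquare (x * (x + 1))) :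
    x ^ d - (x + 1) ^ d ≠ 0 := by
  intro h
  have hχ := congrArg (quadraticChar F) (sub_eq_zero.mp h)
  rw [quadraticChar_pow_of_odd hd, quadraticChar_pow_of_odd hd] at hχ
  rw [← quadraticChar_neg_one_iff_not_isSquare, map_mul, hχ] at hx
  nlinarith [mul_self_nonneg (quadraticChar F (x + 1))]

variable [CharP F 3]

lemma quadraticChar_sq_sub_sq {d : ℕ} (hd : Odd d) (hneg : quadraticChar F (-1) = -1) {x : F}
    (hx : ¬IsSquare (x * (x + 1))) :
    quadraticChar F ((x ^ d - (x + 1) ^ d) ^ 2 - ((x + 1) ^ d + x ^ d) ^ 2) = 1 := by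
  have h3 : (3 : F) = 0 := by exact_mod_cast CharP.cast_eq_zero F 3
  have hfac : (x ^ d - (x + 1) ^ d) ^ 2 - ((x + 1) ^ d + x ^ d) ^ 2 =
      -1 * (x ^ d * (x + 1) ^ d) := by
    linear_combination (-(x ^ d * (x + 1) ^ d)) * h3
  rw [hfac, ← mul_pow, map_mul, hneg, quadraticChar_pow_of_odd hd,
    quadraticChar_neg_one_iff_not_isSquare.mpr hx]
  rfl

lemma pow_three_pow_sub_one_div_two_pow {n m : ℕ} (hcard : Fintype.card F = 3 ^ n)
    (hnm : n + 1 = 2 * m) (a : F) :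
    (a ^ ((3 ^ m - 1) / 2)) ^ (3 ^ m + 1) = quadraticChar F a * a := by
  have hF : ringChar F ≠ 2 := by rw [ringChar.eq F 3]; decide
  have hcube : quadraticChar F a ^ 3 = quadraticChar F a := by
    rw [← MulChar.pow_apply' _ three_ne_zero, (quadraticChar_isQuadratic F).pow_odd (by decide)]
  rw [← pow_mul, three_pow_sub_one_div_two_mul hnm, pow_succ, pow_mul', ← hcard,
    ← quadraticChar_eq_pow_of_char_ne_two' hF]
  exact_mod_cast congrArg (fun t : ℤ => (t : F) * a) hcube

lemma add_pow_add_sub_pow_eq_neg_quadraticChar {n m : ℕ} (hcard : Fintype.card F = 3 ^ n)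
    (hnm : n + 1 = 2 * m) {x : F} (hx : ¬IsSquare (x * (x + 1))) :
    ((x + 1) ^ ((3 ^ m - 1) / 2) + x ^ ((3 ^ m - 1) / 2)) ^ (3 ^ m + 1) +
      (x ^ ((3 ^ m - 1) / 2) - (x + 1) ^ ((3 ^ m - 1) / 2)) ^ (3 ^ m + 1) =
      -(quadraticChar F (x + 1) : F) := by
  rw [add_comm ((x + 1) ^ _), add_pow_add_sub_pow, pow_three_pow_sub_one_div_two_pow hcard hnm,
    pow_three_pow_sub_one_div_two_pow hcard hnm, quadraticChar_eq_neg_of_not_isSquare_mul hx]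
  push_cast
  ring

theorem add_one_pow_add_pow_ne {n m : ℕ} (hcard : Fintype.card F = 3 ^ n)
    (hnm : n + 1 = 2 * m) (hm : Odd m) {x y : F} (hx : ¬IsSquare (x * (x + 1)))
    (hy : ¬IsSquare (y * (y + 1))) (hxy : quadraticChar F (x + 1) = -quadraticChar F (y + 1)) :
    (x + 1) ^ ((3 ^ m - 1) / 2) + x ^ ((3 ^ m - 1) / 2) ≠
      (y + 1) ^ ((3 ^ m - 1) / 2) + y ^ ((3 ^ m - 1) / 2) := by
  intro hw
  have h3 : (3 : F) = 0 := by exact_mod_cast CharP.cast_eq_zero F 3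
  have hd := odd_three_pow_sub_one_div_two hm
  have hs : Even (3 ^ m + 1) := (Odd.pow (by decide)).add_one
  have hneg : quadraticChar F (-1) = -1 :=
    quadraticChar_neg_one_of_card_eq_three_pow hcard (by rw [Nat.odd_iff]; omega)
  have hNx := add_pow_add_sub_pow_eq_neg_quadraticChar hcard hnm hx
  have hNy := add_pow_add_sub_pow_eq_neg_quadraticChar hcard hnm hy
  rw [← hw] at hNy
  set d := (3 ^ m - 1) / 2
  set w := (x + 1) ^ d + x ^ d
  set u := x ^ d - (x + 1) ^ d
  set v := y ^ d - (y + 1) ^ d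
  have hσ : (quadraticChar F (x + 1) : F) = -quadraticChar F (y + 1) := by
    rw [hxy, Int.cast_neg]
  have hsum : u ^ (3 ^ m + 1) * (u ^ 2 - w ^ 2) + v ^ (3 ^ m + 1) * (v ^ 2 - w ^ 2) = 0 :=
    pow_succ_mul_sq_sub_add_eq_zero hcard hnm
      (by linear_combination hNx + hNy - hσ - w ^ (3 ^ m + 1) * h3)
  have hu : quadraticChar F (u ^ (3 ^ m + 1) * (u ^ 2 - w ^ 2)) = 1 := by
    rw [map_mul, quadraticChar_pow_of_even hs (pow_sub_add_one_pow_ne_zero hd hx),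
      quadraticChar_sq_sub_sq hd hneg hx, one_mul]
  have hv : quadraticChar F (v ^ (3 ^ m + 1) * (v ^ 2 - w ^ 2)) = 1 := by
    rw [hw, map_mul, quadraticChar_pow_of_even hs (pow_sub_add_one_pow_ne_zero hd hy),
      quadraticChar_sq_sub_sq hd hneg hy, one_mul]
  rw [eq_neg_of_add_eq_zero_right hsum, neg_eq_neg_one_mul, map_mul, hneg, hu] at hv
  exact absurd hv (by decide)

end

theorem stmt_14 (n : ℕ) (hn : 0 < n) (hcond : n % 4 = 1)
    (d : ℕ) (hd : d = (3 ^ ((n + 1) / 2) - 1) / 2) (b : GaloisField 3 n) :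
    ¬ ∃ x₃ x₄ : GaloisField 3 n,
        (x₃ + 1) ^ d + x₃ ^ d = b ∧ (x₄ + 1) ^ d + x₄ ^ d = b ∧
        (x₃ + 1 ≠ 0 ∧ IsSquare (x₃ + 1)) ∧ ¬ IsSquare x₃ ∧
        ¬ IsSquare (x₄ + 1) ∧ (x₄ ≠ 0 ∧ IsSquare x₄) := by
  rintro ⟨x₃, x₄, h₃, h₄, ⟨hx₃1, hsq₃1⟩, hsq₃, hsq₄1, hx₄, hsq₄⟩
  classical
  let _ := Fintype.ofFinite (GaloisField 3 n)
  have hcard : Fintype.card (GaloisField 3 n) = 3 ^ n := by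
    rw [← Nat.card_eq_fintype_card, GaloisField.card 3 n hn.ne']
  have hχ₃1 := (quadraticChar_one_iff_isSquare hx₃1).mpr hsq₃1
  have hχ₃ := quadraticChar_neg_one_iff_not_isSquare.mpr hsq₃
  have hχ₄1 := quadraticChar_neg_one_iff_not_isSquare.mpr hsq₄1
  have hχ₄ := (quadraticChar_one_iff_isSquare hx₄).mpr hsq₄
  subst hd
  refine add_one_pow_add_pow_ne hcard (by omega) (by rw [Nat.odd_iff]; omega) ?_ ?_ ?_
    (h₃.trans h₄.symm)
  · rw [← quadraticChar_neg_one_iff_not_isSquare, map_mul, hχ₃, hχ₃1]; rfl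
  · rw [← quadraticChar_neg_one_iff_not_isSquare, map_mul, hχ₄, hχ₄1]; rfl
  · rw [hχ₃1, hχ₄1]; rfl
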